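/- arXiv:2003.05335 — 3 statements merged into one kernel-verified Lean document; each statement's English description precedes it below -/
import Mathlib

section
/- Let α > 0 and ν > 0, and let 1 ≤ p ≤ ∞. Then the constant C_- = (1/Γ(2α)) ∫₀¹ (1−u)^{2α−1} u^{ν−α−1} F_α(1 − 1/u) du is finite, and for every f ∈ L_{α+ν,p}(ℝ_+) one has ‖L_-^α f‖_{ν,p} ≤ C_- ‖f‖_{α+ν,p}. -/
open MeasureTheory Set
open scoped ENNReal

noncomputable def Fg (a z : ℝ) : ℝ :=
  (Real.Gamma (2*a) / (Real.Gamma a)^2) *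
    ∫ t in (0:ℝ)..1, t^(a-1) * (1-t)^(a-1) * (1 - z*t)^(-a)

noncomputable def Lplus (a : ℝ) (f : ℝ → ℝ) (x : ℝ) : ℝ :=
  (Real.Gamma (2*a))⁻¹ *
    ∫ u in Set.Ioo (0:ℝ) x, (x-u)^(2*a-1) * u^(-a) * Fg a (1 - x/u) * f u

noncomputable def Lminus (a : ℝ) (f : ℝ → ℝ) (x : ℝ) : ℝ :=
  x^(-a) / Real.Gamma (2*a) *
    ∫ u in Set.Ioi x, (u-x)^(2*a-1) * Fg a (1 - u/x) * f u

noncomputable def mulHaar : Measure ℝ :=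
  (volume.restrict (Set.Ioi (0:ℝ))).withDensity fun x => ENNReal.ofReal x⁻¹

noncomputable def nuNorm (ν : ℝ) (p : ℝ≥0∞) (f : ℝ → ℝ) : ℝ≥0∞ :=
  eLpNorm (fun x => x ^ ν * f x) p mulHaar

def memLnu (ν : ℝ) (p : ℝ≥0∞) (f : ℝ → ℝ) : Prop :=
  MemLp (fun x => x ^ ν * f x) p mulHaar

noncomputable def mellinT (f : ℝ → ℝ) (s : ℂ) : ℂ :=
  ∫ x in Set.Ioi (0:ℝ), (f x : ℂ) * (x : ℂ) ^ (s - 1)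

noncomputable def thetaOp (g : ℝ → ℝ) : ℝ → ℝ := fun x => deriv (fun y => y * deriv g y) x

noncomputable def Dplus (a : ℝ) (f : ℝ → ℝ) : ℝ → ℝ :=
  thetaOp^[⌊a⌋₊ + 1] (Lplus ((⌊a⌋₊ : ℝ) + 1 - a) f)

noncomputable def Dminus (a : ℝ) (f : ℝ → ℝ) : ℝ → ℝ :=
  thetaOp^[⌊a⌋₊ + 1] (Lminus ((⌊a⌋₊ : ℝ) + 1 - a) f)

noncomputable def mulHaarI (l : ℝ) : Measure ℝ :=
  (volume.restrict (Set.Ioo (0:ℝ) l)).withDensity fun x => ENNReal.ofReal x⁻¹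

noncomputable def nuNormI (l ν : ℝ) (p : ℝ≥0∞) (f : ℝ → ℝ) : ℝ≥0∞ :=
  eLpNorm (fun x => x ^ ν * f x) p (mulHaarI l)

def memLnuI (l ν : ℝ) (p : ℝ≥0∞) (f : ℝ → ℝ) : Prop :=
  MemLp (fun x => x ^ ν * f x) p (mulHaarI l)

noncomputable def LplusC (a : ℝ) (f : ℝ → ℂ) (x : ℝ) : ℂ :=
  ((Real.Gamma (2*a) : ℂ))⁻¹ *
    ∫ u in Set.Ioo (0:ℝ) x, (((x-u)^(2*a-1) * u^(-a) * Fg a (1 - x/u) : ℝ) : ℂ) * f u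

def memLnuIC (l ν : ℝ) (p : ℝ≥0∞) (f : ℝ → ℂ) : Prop :=
  MemLp (fun x => (x ^ ν : ℝ) • f x) p (mulHaarI l)


/-!
Substituting `u = x / t` turns `x ^ ν * L_-^α f x` into `Γ(2α)⁻¹ ∫₀¹ k(t) g(x / t) dt`, where
`g y = y ^ (α + ν) * f y` and `k` is the integrand of `C_-`; `k` is integrable because
`F_α(z) = O((1 - z) ^ (ε - α))` as `z → -∞` for every `0 < ε < α`. Each dilation `x ↦ x / t`
preserves the Haar measure `dx / x` of `ℝ_+`, so averaging `g` against `k` costs at most the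
factor `‖k‖₁` in `Lᵖ(dx / x)`: for `p < ∞` by Hölder's inequality in `t` and Tonelli, for
`p = ∞` directly.
-/

open Real

theorem integrableOn_rpow_mul_one_sub_rpow {a b : ℝ} (ha : 0 < a) (hb : 0 < b) :
    IntegrableOn (fun t : ℝ => t ^ (a - 1) * (1 - t) ^ (b - 1)) (Ioo 0 1) := by
  have h := Complex.betaIntegral_convergent (u := a) (v := b) (by simpa) (by simpa)
  rw [intervalIntegrable_iff_integrableOn_Ioo_of_le zero_le_one] at h
  refine IntegrableOn.congr_fun h.norm (fun t ht => ?_) measurableSet_Ioo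
  have h1t : 0 < 1 - t := sub_pos.2 ht.2
  have hsub : (1 : ℂ) - t = ((1 - t : ℝ) : ℂ) := by push_cast; ring
  rw [norm_mul, hsub, Complex.norm_cpow_eq_rpow_re_of_pos ht.1,
    Complex.norm_cpow_eq_rpow_re_of_pos h1t]
  simp

theorem measurable_Fg (a : ℝ) : Measurable (Fg a) := by
  unfold Fg
  refine Measurable.const_mul ?_ _
  simp only [intervalIntegral]
  refine Measurable.sub ?_ ?_ <;>
  exact (StronglyMeasurable.integral_prod_right (by fun_prop)).measurable

theorem Fg_eq_setIntegral (a z : ℝ) :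
    Fg a z = Real.Gamma (2 * a) / Real.Gamma a ^ 2 *
      ∫ t in Ioo (0:ℝ) 1, t ^ (a - 1) * (1 - t) ^ (a - 1) * (1 - z * t) ^ (-a) := by
  rw [Fg, intervalIntegral.integral_of_le zero_le_one, integral_Ioc_eq_integral_Ioo]

theorem Fg_nonneg {a z : ℝ} (ha : 0 < a) (hz : z ≤ 0) : 0 ≤ Fg a z := by
  rw [Fg_eq_setIntegral]
  refine mul_nonneg (div_nonneg (Gamma_pos_of_pos (by linarith)).le (sq_nonneg _)) ?_
  refine setIntegral_nonneg measurableSet_Ioo fun t ht => ?_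
  exact mul_nonneg (mul_nonneg (rpow_nonneg ht.1.le _) (rpow_nonneg (by linarith [ht.2]) _))
    (rpow_nonneg (by nlinarith [ht.1]) _)

/-- Since `1 - z t` dominates both `1 - t` and `t (1 - z)`, the singular factor can be split
between the two endpoints of the Euler integral. -/
theorem one_sub_mul_rpow_neg_le {a ε z t : ℝ} (hε : 0 ≤ ε) (hεa : ε ≤ a) (hz : z ≤ 0)
    (ht : t ∈ Ioo (0:ℝ) 1) :
    (1 - z * t) ^ (-a) ≤ (1 - t) ^ (-ε) * (t * (1 - z)) ^ (ε - a) := by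
  have h1t : 0 < 1 - t := sub_pos.2 ht.2
  have htz : 0 < t * (1 - z) := mul_pos ht.1 (by linarith)
  have hpos : 0 < 1 - z * t := by nlinarith [ht.1]
  calc (1 - z * t) ^ (-a) = (1 - z * t) ^ (-ε) * (1 - z * t) ^ (ε - a) := by
        rw [← rpow_add hpos]; ring_nf
    _ ≤ (1 - t) ^ (-ε) * (t * (1 - z)) ^ (ε - a) :=
        mul_le_mul (rpow_le_rpow_of_nonpos h1t (by nlinarith [ht.1]) (by linarith))
          (rpow_le_rpow_of_nonpos htz (by nlinarith [ht.2]) (by linarith))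
          (rpow_nonneg hpos.le _) (rpow_nonneg h1t.le _)

theorem exists_Fg_le {a ε : ℝ} (hε : 0 < ε) (hεa : ε < a) :
    ∃ C, ∀ z ≤ 0, Fg a z ≤ C * (1 - z) ^ (ε - a) := by
  have ha : 0 < a := hε.trans hεa
  refine ⟨Real.Gamma (2 * a) / Real.Gamma a ^ 2 *
    ∫ t in Ioo (0:ℝ) 1, t ^ (ε - 1) * (1 - t) ^ (a - ε - 1), fun z hz => ?_⟩
  rw [Fg_eq_setIntegral, mul_assoc, ← integral_mul_const]
  refine mul_le_mul_of_nonneg_left ?_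
    (div_nonneg (Gamma_pos_of_pos (by linarith)).le (sq_nonneg _))
  refine integral_mono_of_nonneg ?_
    ((integrableOn_rpow_mul_one_sub_rpow hε (by linarith : 0 < a - ε)).mul_const _) ?_
  all_goals filter_upwards [ae_restrict_mem measurableSet_Ioo] with t ht
  · exact mul_nonneg (mul_nonneg (rpow_nonneg ht.1.le _) (rpow_nonneg (by linarith [ht.2]) _))
      (rpow_nonneg (by nlinarith [ht.1]) _)
  · have h1t : 0 < 1 - t := sub_pos.2 ht.2
    calc t ^ (a - 1) * (1 - t) ^ (a - 1) * (1 - z * t) ^ (-a)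
        ≤ t ^ (a - 1) * (1 - t) ^ (a - 1) * ((1 - t) ^ (-ε) * (t * (1 - z)) ^ (ε - a)) :=
          mul_le_mul_of_nonneg_left (one_sub_mul_rpow_neg_le hε.le hεa.le hz ht)
            (mul_nonneg (rpow_nonneg ht.1.le _) (rpow_nonneg h1t.le _))
      _ = t ^ (ε - 1) * (1 - t) ^ (a - ε - 1) * (1 - z) ^ (ε - a) := by
          rw [mul_rpow ht.1.le (by linarith)]
          have e1 : t ^ (ε - 1) = t ^ (a - 1) * t ^ (ε - a) := by rw [← rpow_add ht.1]; ring_nf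
          have e2 : (1 - t) ^ (a - ε - 1) = (1 - t) ^ (a - 1) * (1 - t) ^ (-ε) := by
            rw [← rpow_add h1t]; ring_nf
          rw [e1, e2]; ring

/-- The kernel of `L_-^α` in the variable `t = x / u`; its integral over `(0, 1)` is
`Γ(2α) C_-`. -/
noncomputable def laguerreMinusKernel (α ν u : ℝ) : ℝ :=
  (1 - u) ^ (2 * α - 1) * u ^ (ν - α - 1) * Fg α (1 - 1 / u)

theorem one_sub_one_div_nonpos {u : ℝ} (hu : u ∈ Ioo (0:ℝ) 1) : 1 - 1 / u ≤ 0 := by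
  rw [sub_nonpos, le_div_iff₀ hu.1]; linarith [hu.2]

theorem laguerreMinusKernel_nonneg {α ν u : ℝ} (hα : 0 < α) (hu : u ∈ Ioo (0:ℝ) 1) :
    0 ≤ laguerreMinusKernel α ν u :=
  mul_nonneg (mul_nonneg (rpow_nonneg (by linarith [hu.2]) _) (rpow_nonneg hu.1.le _))
    (Fg_nonneg hα (one_sub_one_div_nonpos hu))

theorem measurable_laguerreMinusKernel (α ν : ℝ) : Measurable (laguerreMinusKernel α ν) := by
  unfold laguerreMinusKernel
  have := measurable_Fg α
  fun_prop

theorem integrableOn_laguerreMinusKernel {α ν : ℝ} (hα : 0 < α) (hν : 0 < ν) :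
    IntegrableOn (laguerreMinusKernel α ν) (Ioo 0 1) := by
  obtain ⟨ε, hε, hεα, hεν⟩ : ∃ ε, 0 < ε ∧ ε < α ∧ ε < ν :=
    ⟨min α ν / 2, by positivity, by linarith [min_le_left α ν], by linarith [min_le_right α ν]⟩
  obtain ⟨C, hC⟩ := exists_Fg_le hε hεα
  refine Integrable.mono'
    ((integrableOn_rpow_mul_one_sub_rpow (by linarith : 0 < ν - ε) (by linarith : 0 < 2 * α))
      |>.const_mul C) (measurable_laguerreMinusKernel α ν).aestronglyMeasurable ?_
  filter_upwards [ae_restrict_mem measurableSet_Ioo] with u hu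
  have h1u : 0 < 1 - u := sub_pos.2 hu.2
  rw [norm_of_nonneg (laguerreMinusKernel_nonneg hα hu), laguerreMinusKernel]
  calc (1 - u) ^ (2 * α - 1) * u ^ (ν - α - 1) * Fg α (1 - 1 / u)
      ≤ (1 - u) ^ (2 * α - 1) * u ^ (ν - α - 1) * (C * (1 - (1 - 1 / u)) ^ (ε - α)) :=
        mul_le_mul_of_nonneg_left (hC _ (one_sub_one_div_nonpos hu))
          (mul_nonneg (rpow_nonneg h1u.le _) (rpow_nonneg hu.1.le _))
    _ = C * (u ^ (ν - ε - 1) * (1 - u) ^ (2 * α - 1)) := by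
        rw [sub_sub_cancel, one_div, inv_rpow hu.1.le, ← rpow_neg hu.1.le,
          show ν - ε - 1 = (ν - α - 1) + -(ε - α) by ring, rpow_add hu.1]
        ring

instance : SFinite mulHaar := by
  unfold mulHaar; infer_instance

theorem lintegral_mulHaar {f : ℝ → ℝ≥0∞} (hf : Measurable f) :
    ∫⁻ x, f x ∂mulHaar = ∫⁻ x in Ioi 0, ENNReal.ofReal x⁻¹ * f x :=
  lintegral_withDensity_eq_lintegral_mul _ measurable_inv.ennreal_ofReal hf

theorem measurePreserving_div_const_mulHaar {c : ℝ} (hc : 0 < c) :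
    MeasurePreserving (· / c) mulHaar mulHaar := by
  refine ⟨measurable_id.div_const c, Measure.ext_of_lintegral _ fun φ hφ => ?_⟩
  have himage : (c * ·) '' Ioi (0:ℝ) = Ioi 0 := by
    simpa using image_const_mul_Ioi_zero hc
  rw [lintegral_map hφ (by fun_prop), lintegral_mulHaar hφ,
    lintegral_mulHaar (f := fun x => φ (x / c)) (by fun_prop)]
  conv_lhs => rw [← himage]
  rw [lintegral_image_eq_lintegral_abs_deriv_mul (f' := fun _ => c) measurableSet_Ioi
      (fun y _ => by simpa using ((hasDerivAt_id y).const_mul c).hasDerivWithinAt)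
      (mul_right_injective₀ hc.ne').injOn]
  refine setLIntegral_congr_fun measurableSet_Ioi fun y _ => ?_
  rw [abs_of_pos hc, mul_div_cancel_left₀ _ hc.ne', ← mul_assoc,
    ← ENNReal.ofReal_mul hc.le, mul_inv, mul_inv_cancel_left₀ hc.ne']

theorem setLIntegral_Ioi_eq_setLIntegral_Ioo_div {x : ℝ} (hx : 0 < x) (g : ℝ → ℝ≥0∞) :
    ∫⁻ u in Ioi x, g u = ∫⁻ t in Ioo 0 1, ENNReal.ofReal (x / t ^ 2) * g (x / t) := by
  have himage : (x / ·) '' Ioo (0:ℝ) 1 = Ioi x := by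
    ext u
    constructor
    · rintro ⟨t, ht, rfl⟩
      exact (lt_div_iff₀ ht.1).2 (mul_lt_of_lt_one_right hx ht.2)
    · intro (hu : x < u)
      have hu0 : 0 < u := hx.trans hu
      exact ⟨x / u, ⟨div_pos hx hu0, (div_lt_one hu0).2 hu⟩, div_div_cancel₀ hx.ne'⟩
  rw [← himage, lintegral_image_eq_lintegral_abs_deriv_mul measurableSet_Ioo
    (fun t ht => by simpa [div_eq_mul_inv] using
      ((hasDerivAt_inv ht.1.ne').const_mul x).hasDerivWithinAt)
    fun t _ s _ h =>
      inv_injective (mul_left_cancel₀ hx.ne' (by simpa only [div_eq_mul_inv] using h))]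
  refine setLIntegral_congr_fun measurableSet_Ioo fun t ht => ?_
  have : 0 < t := ht.1
  rw [abs_neg, abs_of_pos (by positivity), div_eq_mul_inv x (t ^ 2)]

theorem ENNReal.lintegral_mul_rpow_le {T : Type*} [MeasurableSpace T] {ν : Measure T}
    {K H : T → ℝ≥0∞} (hK : AEMeasurable K ν) (hH : AEMeasurable H ν) {r : ℝ} (hr : 1 ≤ r) :
    (∫⁻ t, K t * H t ∂ν) ^ r ≤ (∫⁻ t, K t ∂ν) ^ (r - 1) * ∫⁻ t, K t * H t ^ r ∂ν := by
  rcases hr.eq_or_lt with rfl | hr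
  · simp
  have hr0 : 0 < r := one_pos.trans hr
  have hconj : (r / (r - 1)).HolderConjugate r := (Real.HolderConjugate.conjExponent hr).symm
  have hr' : 0 ≤ 1 - 1 / r := by rw [sub_nonneg, div_le_one hr0]; exact hr.le
  have hsplit : ∀ t, K t * H t = K t ^ (1 - 1 / r) * (K t ^ (1 / r) * H t) := fun t => by
    rw [← mul_assoc, ← ENNReal.rpow_add_of_nonneg _ _ hr' (by positivity)]
    simp
  calc (∫⁻ t, K t * H t ∂ν) ^ r
      ≤ ((∫⁻ t, (K t ^ (1 - 1 / r)) ^ (r / (r - 1)) ∂ν) ^ (1 / (r / (r - 1))) *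
          (∫⁻ t, (K t ^ (1 / r) * H t) ^ r ∂ν) ^ (1 / r)) ^ r := by
        gcongr
        simp_rw [hsplit]
        exact ENNReal.lintegral_mul_le_Lp_mul_Lq ν hconj (hK.pow_const _)
          ((hK.pow_const _).mul hH)
    _ = (∫⁻ t, K t ∂ν) ^ (r - 1) * ∫⁻ t, K t * H t ^ r ∂ν := by
        have hr1 : r - 1 ≠ 0 := by linarith
        have e1 : ∀ t, (K t ^ (1 - 1 / r)) ^ (r / (r - 1)) = K t := fun t => by
          rw [← ENNReal.rpow_mul, show (1 - 1 / r) * (r / (r - 1)) = 1 by field_simp,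
            ENNReal.rpow_one]
        have e2 : ∀ t, (K t ^ (1 / r) * H t) ^ r = K t * H t ^ r := fun t => by
          rw [ENNReal.mul_rpow_of_nonneg _ _ hr0.le, ← ENNReal.rpow_mul,
            one_div_mul_cancel hr0.ne', ENNReal.rpow_one]
        simp_rw [e1, e2]
        rw [ENNReal.mul_rpow_of_nonneg _ _ hr0.le, ← ENNReal.rpow_mul, ← ENNReal.rpow_mul,
          one_div_mul_cancel hr0.ne', ENNReal.rpow_one,
          show 1 / (r / (r - 1)) * r = r - 1 by field_simp]

section KernelAveraging

variable {X T : Type*} [MeasurableSpace X] [MeasurableSpace T] {μ : Measure X} {ν : Measure T}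
  [SFinite μ] [SFinite ν] {φ : T → X → X}

theorem quasiMeasurePreserving_of_ae_measurePreserving
    (hφ : Measurable fun z : X × T => φ z.2 z.1) (hpres : ∀ᵐ t ∂ν, MeasurePreserving (φ t) μ μ) :
    Measure.QuasiMeasurePreserving (fun z : X × T => φ z.2 z.1) (μ.prod ν) μ := by
  refine ⟨hφ, Measure.AbsolutelyContinuous.mk fun s hs hs0 => ?_⟩
  rw [Measure.map_apply hφ hs, Measure.prod_apply_symm (hφ hs)]
  refine lintegral_eq_zero_of_ae_eq_zero (hpres.mono fun t ht => ?_)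
  exact (ht.measure_preimage hs.nullMeasurableSet).trans hs0

theorem lintegral_lintegral_mul_comp (hφ : Measurable fun z : X × T => φ z.2 z.1)
    (hpres : ∀ᵐ t ∂ν, MeasurePreserving (φ t) μ μ) {K : T → ℝ≥0∞} {G : X → ℝ≥0∞}
    (hK : Measurable K) (hG : Measurable G) :
    ∫⁻ x, ∫⁻ t, K t * G (φ t x) ∂ν ∂μ = (∫⁻ t, K t ∂ν) * ∫⁻ x, G x ∂μ := by
  rw [lintegral_lintegral_swap ((hK.comp measurable_snd).mul (hG.comp hφ)).aemeasurable,
    ← lintegral_mul_const _ hK]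
  refine lintegral_congr_ae (hpres.mono fun t ht => ?_)
  dsimp only
  rw [lintegral_const_mul (K t) (f := fun x => G (φ t x)) (hG.comp ht.measurable),
    ht.lintegral_comp hG]

theorem lintegral_lintegral_mul_comp_rpow_le (hφ : Measurable fun z : X × T => φ z.2 z.1)
    (hpres : ∀ᵐ t ∂ν, MeasurePreserving (φ t) μ μ) {K : T → ℝ≥0∞} {G : X → ℝ≥0∞}
    (hK : Measurable K) (hG : Measurable G) {r : ℝ} (hr : 1 ≤ r) :
    ∫⁻ x, (∫⁻ t, K t * G (φ t x) ∂ν) ^ r ∂μ ≤ (∫⁻ t, K t ∂ν) ^ r * ∫⁻ x, G x ^ r ∂μ := by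
  have hGφ : ∀ x, Measurable fun t => G (φ t x) := fun x =>
    hG.comp (hφ.comp measurable_prodMk_left)
  calc ∫⁻ x, (∫⁻ t, K t * G (φ t x) ∂ν) ^ r ∂μ
      ≤ ∫⁻ x, (∫⁻ t, K t ∂ν) ^ (r - 1) * ∫⁻ t, K t * G (φ t x) ^ r ∂ν ∂μ :=
        lintegral_mono fun x =>
          ENNReal.lintegral_mul_rpow_le hK.aemeasurable (hGφ x).aemeasurable hr
    _ = (∫⁻ t, K t ∂ν) ^ (r - 1) * ((∫⁻ t, K t ∂ν) * ∫⁻ x, G x ^ r ∂μ) := by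
        rw [lintegral_const_mul _ ?_,
          lintegral_lintegral_mul_comp hφ hpres hK (hG.pow_const r)]
        exact Measurable.lintegral_prod_right' (f := fun z : X × T => K z.2 * G (φ z.2 z.1) ^ r)
          ((hK.comp measurable_snd).mul ((hG.comp hφ).pow_const r))
    _ = (∫⁻ t, K t ∂ν) ^ r * ∫⁻ x, G x ^ r ∂μ := by
        rw [← mul_assoc]
        congr 1
        calc (∫⁻ t, K t ∂ν) ^ (r - 1) * ∫⁻ t, K t ∂ν
            = (∫⁻ t, K t ∂ν) ^ (r - 1) * (∫⁻ t, K t ∂ν) ^ (1 : ℝ) := by rw [ENNReal.rpow_one]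
          _ = (∫⁻ t, K t ∂ν) ^ r := by
            rw [← ENNReal.rpow_add_of_nonneg _ _ (by linarith) zero_le_one, sub_add_cancel]

theorem ae_lintegral_mul_comp_le (hφ : Measurable fun z : X × T => φ z.2 z.1)
    (hpres : ∀ᵐ t ∂ν, MeasurePreserving (φ t) μ μ) {K : T → ℝ≥0∞} {G : X → ℝ≥0∞}
    (hK : Measurable K) {M : ℝ≥0∞} (hGM : ∀ᵐ y ∂μ, G y ≤ M) :
    ∀ᵐ x ∂μ, ∫⁻ t, K t * G (φ t x) ∂ν ≤ (∫⁻ t, K t ∂ν) * M := by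
  filter_upwards [Measure.ae_ae_of_ae_prod
    ((quasiMeasurePreserving_of_ae_measurePreserving hφ hpres).ae hGM)] with x hx
  rw [← lintegral_mul_const _ hK]
  exact lintegral_mono_ae (hx.mono fun t ht => mul_le_mul_right ht _)

theorem eLpNorm_le_lintegral_mul_eLpNorm {E F : Type*} [TopologicalSpace E] [ContinuousENorm E]
    [ENorm F]
    (hφ : Measurable fun z : X × T => φ z.2 z.1)
    (hpres : ∀ᵐ t ∂ν, MeasurePreserving (φ t) μ μ) {K : T → ℝ≥0∞} (hK : Measurable K)
    {p : ℝ≥0∞} (hp : 1 ≤ p) {g : X → E} (hg : AEStronglyMeasurable g μ) {h : X → F}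
    (hh : ∀ᵐ x ∂μ, ‖h x‖ₑ ≤ ∫⁻ t, K t * ‖g (φ t x)‖ₑ ∂ν) :
    eLpNorm h p μ ≤ (∫⁻ t, K t ∂ν) * eLpNorm g p μ := by
  set G : X → ℝ≥0∞ := fun x => ‖hg.mk g x‖ₑ
  have hG : Measurable G := hg.stronglyMeasurable_mk.enorm
  have hhG : ∀ᵐ x ∂μ, ‖h x‖ₑ ≤ ∫⁻ t, K t * G (φ t x) ∂ν := by
    filter_upwards [hh, Measure.ae_ae_of_ae_prod
      ((quasiMeasurePreserving_of_ae_measurePreserving hφ hpres).ae hg.ae_eq_mk)] with x hx hmk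
    refine hx.trans_eq (lintegral_congr_ae (hmk.mono fun t ht => ?_))
    simp only [G, ht]
  rw [eLpNorm_congr_ae hg.ae_eq_mk]
  rcases eq_or_ne p ∞ with rfl | hp_top
  · simp only [eLpNorm_exponent_top]
    refine essSup_le_of_ae_le _ ?_
    filter_upwards [hhG, ae_lintegral_mul_comp_le hφ hpres hK
      (ae_le_eLpNormEssSup (f := hg.mk g))] with x h1 h2
    exact h1.trans h2
  have hp0 : p ≠ 0 := (zero_lt_one.trans_le hp).ne'
  have hr : 1 ≤ p.toReal := by
    simpa using ENNReal.toReal_mono hp_top hp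
  have hr0 : 0 < p.toReal := zero_lt_one.trans_le hr
  rw [eLpNorm_eq_eLpNorm' hp0 hp_top, eLpNorm_eq_eLpNorm' hp0 hp_top, eLpNorm', eLpNorm']
  calc (∫⁻ x, ‖h x‖ₑ ^ p.toReal ∂μ) ^ (1 / p.toReal)
      ≤ ((∫⁻ t, K t ∂ν) ^ p.toReal * ∫⁻ x, G x ^ p.toReal ∂μ) ^ (1 / p.toReal) := by
        gcongr ?_ ^ _
        refine (lintegral_mono_ae (hhG.mono fun x hx => ?_)).trans
          (lintegral_lintegral_mul_comp_rpow_le hφ hpres hK hG hr)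
        gcongr
    _ = (∫⁻ t, K t ∂ν) * (∫⁻ x, G x ^ p.toReal ∂μ) ^ (1 / p.toReal) := by
        rw [ENNReal.mul_rpow_of_nonneg _ _ (by positivity), ← ENNReal.rpow_mul,
          mul_one_div_cancel hr0.ne', ENNReal.rpow_one]

end KernelAveraging

theorem rpow_mul_substitution_factor_eq {α ν x t : ℝ} (hx : 0 < x) (ht : t ∈ Ioo (0:ℝ) 1) :
    x ^ ν * x ^ (-α) * (x / t ^ 2 * (x / t - x) ^ (2 * α - 1)) =
      (1 - t) ^ (2 * α - 1) * t ^ (ν - α - 1) * (x / t) ^ (α + ν) := by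
  have ht0 : 0 < t := ht.1
  have h1t : 0 < 1 - t := sub_pos.2 ht.2
  rw [show x / t - x = x * (1 - t) / t by field_simp]
  refine log_injOn_pos (mem_Ioi.mpr (by positivity)) (mem_Ioi.mpr (by positivity)) ?_
  simp (disch := positivity) only [log_mul, log_div, log_rpow, log_pow]
  ring

theorem enorm_rpow_mul_Lminus_le {α ν x : ℝ} (hα : 0 < α) (f : ℝ → ℝ) (hx : 0 < x) :
    ‖x ^ ν * Lminus α f x‖ₑ ≤ ∫⁻ t in Ioo 0 1,
      ENNReal.ofReal ((Real.Gamma (2 * α))⁻¹ * laguerreMinusKernel α ν t) *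
        ‖(x / t) ^ (α + ν) * f (x / t)‖ₑ := by
  have hΓ : 0 < Real.Gamma (2 * α) := Gamma_pos_of_pos (by linarith)
  set c := x ^ ν * x ^ (-α) / Real.Gamma (2 * α)
  have hc : 0 ≤ c := by positivity
  calc ‖x ^ ν * Lminus α f x‖ₑ
      = ENNReal.ofReal c * ‖∫ u in Ioi x, (u - x) ^ (2 * α - 1) * Fg α (1 - u / x) * f u‖ₑ := by
        rw [Lminus, ← mul_assoc, ← mul_div_assoc, enorm_mul, Real.enorm_eq_ofReal hc]
    _ ≤ ENNReal.ofReal c *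
          ∫⁻ u in Ioi x, ‖(u - x) ^ (2 * α - 1) * Fg α (1 - u / x) * f u‖ₑ := by
        gcongr
        exact enorm_integral_le_lintegral_enorm _
    _ = ∫⁻ t in Ioo 0 1, ENNReal.ofReal c * (ENNReal.ofReal (x / t ^ 2) *
          ‖(x / t - x) ^ (2 * α - 1) * Fg α (1 - x / t / x) * f (x / t)‖ₑ) := by
        rw [setLIntegral_Ioi_eq_setLIntegral_Ioo_div hx,
          lintegral_const_mul' _ _ ENNReal.ofReal_ne_top]
    _ = _ := by
        refine setLIntegral_congr_fun measurableSet_Ioo fun t ht => ?_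
        have hxt : x < x / t := (lt_div_iff₀ ht.1).2 (mul_lt_of_lt_one_right hx ht.2)
        have hFg := Fg_nonneg hα (one_sub_one_div_nonpos ht)
        rw [show x / t / x = 1 / t by field_simp, enorm_mul (_ * Fg α (1 - 1 / t)),
          enorm_mul ((x / t) ^ (α + ν)),
          Real.enorm_eq_ofReal (mul_nonneg (rpow_nonneg (by linarith) _) hFg),
          Real.enorm_eq_ofReal (rpow_nonneg (hx.trans hxt).le _), ← mul_assoc, ← mul_assoc,
          ← ENNReal.ofReal_mul hc, ← ENNReal.ofReal_mul (by positivity),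
          ← mul_assoc (ENNReal.ofReal ((Real.Gamma (2 * α))⁻¹ * laguerreMinusKernel α ν t)),
          ← ENNReal.ofReal_mul (mul_nonneg (inv_nonneg.2 hΓ.le)
            (laguerreMinusKernel_nonneg hα ht))]
        congr 2
        rw [laguerreMinusKernel]
        linear_combination (Fg α (1 - 1 / t) / Real.Gamma (2 * α)) *
          rpow_mul_substitution_factor_eq (α := α) (ν := ν) hx ht

theorem ae_mulHaar_pos : ∀ᵐ x ∂mulHaar, 0 < x :=
  (withDensity_absolutelyContinuous _ _).ae_le (ae_restrict_mem measurableSet_Ioi)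

/-- Boundedness of the right-sided Laguerre fractional integral
`L_-^α : L_{α+ν,p}(ℝ_+) → L_{ν,p}(ℝ_+)`. -/
theorem stmt9 (α ν : ℝ) (hα : 0 < α) (hν : 0 < ν) (p : ℝ≥0∞) (hp : 1 ≤ p)
    (f : ℝ → ℝ) (hf : memLnu (α + ν) p f) :
    IntegrableOn (fun u => (1-u)^(2*α-1) * u^(ν-α-1) * Fg α (1-1/u)) (Set.Ioo 0 1) volume ∧
    nuNorm ν p (Lminus α f) ≤
      ENNReal.ofReal ((Real.Gamma (2*α))⁻¹ *
        ∫ u in Set.Ioo (0:ℝ) 1, (1-u)^(2*α-1) * u^(ν-α-1) * Fg α (1-1/u)) *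
      nuNorm (α + ν) p f := by
  have hk := integrableOn_laguerreMinusKernel hα hν
  refine ⟨hk, ?_⟩
  change eLpNorm _ p mulHaar ≤ ENNReal.ofReal ((Real.Gamma (2 * α))⁻¹ *
    ∫ u in Ioo 0 1, laguerreMinusKernel α ν u) * eLpNorm _ p mulHaar
  rw [← integral_const_mul, ofReal_integral_eq_lintegral_ofReal (hk.const_mul _)
    (ae_restrict_of_forall_mem measurableSet_Ioo fun t ht => mul_nonneg
      (inv_nonneg.2 (Gamma_pos_of_pos (by linarith)).le) (laguerreMinusKernel_nonneg hα ht))]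
  refine eLpNorm_le_lintegral_mul_eLpNorm (φ := fun t x => x / t) (by fun_prop)
    (ae_restrict_of_forall_mem measurableSet_Ioo fun t ht =>
      measurePreserving_div_const_mulHaar ht.1)
    ((measurable_laguerreMinusKernel α ν).const_mul _).ennreal_ofReal hp hf.aestronglyMeasurable ?_
  filter_upwards [ae_mulHaar_pos] with x hx using enorm_rpow_mul_Lminus_le hα f hx
end

section
/- Let a > 0 and x > u > 0. Then (1/Γ(2a)) u^{−a} F_a(1 − x/u) = (2/Γ(a)²) ∫₀^∞ ( 2√(xu) · cosh(y) + x + u )^{−a} dy; equivalently, the kernel ((x−u)^{2a−1}/Γ(2a)) u^{−a} F_a(1 − x/u) of the Laguerre fractional integral equals (2(x−u)^{2a−1}/Γ(a)²) ∫₀^∞ ( 2√(xu) cosh(y) + x + u )^{−a} dy. -/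
open MeasureTheory Set
open scoped ENNReal

/-!
Substituting `t = 1 / (1 + c e^y)` with `c = √(x/u)` maps `ℝ` onto `(0, 1)` with
`dt = -t (1 - t) dy`, and turns the Euler integrand `t^(a-1) (1-t)^(a-1) ((1-t) u + t x)^(-a)`
into `(u/t + x/(1-t))^(-a) = (2 √(xu) cosh y + x + u)^(-a)`. The new integrand is even in `y`,
which gives the factor `2`.
-/

open Real

theorem integral_Ioo_zero_one_eq_integral_inv_one_add_mul_exp {c : ℝ} (hc : 0 < c)
    (g : ℝ → ℝ) :
    ∫ t in Ioo 0 1, g t =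
      ∫ y, (1 + c * exp y)⁻¹ * (1 - (1 + c * exp y)⁻¹) * g (1 + c * exp y)⁻¹ := by
  set φ : ℝ → ℝ := fun y => (1 + c * exp y)⁻¹
  have hpos : ∀ y, 0 < 1 + c * exp y := fun y => by positivity
  have hderiv : ∀ y ∈ univ, HasDerivWithinAt φ (-(c * exp y) / (1 + c * exp y) ^ 2) univ y :=
    fun y _ => (((hasDerivAt_exp y).const_mul c).const_add 1).inv (hpos y).ne'
      |>.hasDerivWithinAt
  have hinj : InjOn φ univ := fun y₁ _ y₂ _ h =>
    exp_injective (mul_left_cancel₀ hc.ne' (add_left_cancel (inv_injective h)))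
  have himage : φ '' univ = Ioo 0 1 := by
    refine Subset.antisymm ?_ fun t ⟨ht₀, ht₁⟩ => ?_
    · rintro _ ⟨y, -, rfl⟩
      have : 0 < c * exp y := by positivity
      exact ⟨inv_pos.mpr (hpos y), inv_lt_one_of_one_lt₀ (by linarith)⟩
    · have hq : 0 < (t⁻¹ - 1) / c := div_pos (by linarith [(one_lt_inv₀ ht₀).mpr ht₁]) hc
      refine ⟨log ((t⁻¹ - 1) / c), trivial, ?_⟩
      simp only [φ, exp_log hq]
      field_simp
      ring
  rw [← himage, integral_image_eq_integral_abs_deriv_smul MeasurableSet.univ hderiv hinj,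
    Measure.restrict_univ]
  congr 1 with y
  simp only [φ]
  have hneg : -(c * exp y) / (1 + c * exp y) ^ 2 < 0 :=
    div_neg_of_neg_of_pos (neg_neg_of_pos (by positivity)) (by positivity)
  rw [smul_eq_mul, abs_of_neg hneg]
  field_simp
  ring

theorem mul_mul_rpow_sub_one_mul_rpow_neg {p q D : ℝ} (a : ℝ) (hp : 0 < p) (hq : 0 < q)
    (hD : 0 ≤ D) :
    p * q * (p ^ (a - 1) * q ^ (a - 1) * D ^ (-a)) = (D / (p * q)) ^ (-a) := by
  have hpq : 0 < p * q := mul_pos hp hq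
  rw [← mul_rpow hp.le hq.le, div_rpow hD hpq.le, rpow_neg hpq.le, rpow_sub_one hpq.ne']
  field_simp

theorem div_inv_one_add_mul_one_sub_inv_one_add {e : ℝ} (he : 0 < e) (u x : ℝ) :
    ((1 - (1 + e)⁻¹) * u + (1 + e)⁻¹ * x) / ((1 + e)⁻¹ * (1 - (1 + e)⁻¹)) =
      u * e + x / e + x + u := by
  have : 0 < 1 + e := by linarith
  rw [show 1 - (1 + e)⁻¹ = e / (1 + e) by field_simp; ring]
  field_simp
  ring

theorem mul_sqrt_div_mul_exp_add_div {u x : ℝ} (hu : 0 < u) (hx : 0 < x) (y : ℝ) :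
    u * (√(x / u) * exp y) + x / (√(x / u) * exp y) = 2 * √(x * u) * cosh y := by
  have hsq : √(x / u) ^ 2 = x / u := sq_sqrt (div_pos hx hu).le
  have hxu : √(x * u) = u * √(x / u) := by
    rw [← sqrt_sq hu.le, ← sqrt_mul (sq_nonneg u), sqrt_sq hu.le]
    congr 1; field_simp
  rw [hxu, cosh_eq, exp_neg]
  field_simp
  rw [hsq]
  field_simp

theorem rpow_neg_mul_integral_euler_eq_two_mul_integral_cosh (a : ℝ) {u x : ℝ} (hu : 0 < u)
    (hx : 0 < x) :
    u ^ (-a) *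
        ∫ t in (0 : ℝ)..1, t ^ (a - 1) * (1 - t) ^ (a - 1) * (1 - (1 - x / u) * t) ^ (-a) =
      2 * ∫ y in Ioi 0, (2 * √(x * u) * cosh y + x + u) ^ (-a) := by
  have hc : 0 < √(x / u) := sqrt_pos.mpr (div_pos hx hu)
  have hintegrand : EqOn
      (fun t => u ^ (-a) * (t ^ (a - 1) * (1 - t) ^ (a - 1) * (1 - (1 - x / u) * t) ^ (-a)))
      (fun t => t ^ (a - 1) * (1 - t) ^ (a - 1) * ((1 - t) * u + t * x) ^ (-a)) (Ioo 0 1) := by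
    intro t ⟨ht₀, ht₁⟩
    have hbase : u * (1 - (1 - x / u) * t) = (1 - t) * u + t * x := by field_simp; ring
    have hnonneg : 0 ≤ 1 - (1 - x / u) * t := by nlinarith [div_pos hx hu]
    simp only
    rw [← hbase, mul_rpow hu.le hnonneg]
    ring
  rw [intervalIntegral.integral_of_le zero_le_one, integral_Ioc_eq_integral_Ioo,
    ← integral_const_mul, setIntegral_congr_fun measurableSet_Ioo hintegrand,
    integral_Ioo_zero_one_eq_integral_inv_one_add_mul_exp hc, ← integral_comp_abs]
  congr 1 with y
  have he : 0 < √(x / u) * exp y := by positivity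
  have ht₀ : 0 < (1 + √(x / u) * exp y)⁻¹ := by positivity
  have ht₁ : 0 < 1 - (1 + √(x / u) * exp y)⁻¹ :=
    sub_pos.mpr (inv_lt_one_of_one_lt₀ (by linarith))
  rw [mul_mul_rpow_sub_one_mul_rpow_neg a ht₀ ht₁ (by positivity),
    div_inv_one_add_mul_one_sub_inv_one_add he, mul_sqrt_div_mul_exp_add_div hu hx, cosh_abs]

/-- The Legendre-integral representation of the kernel of the Laguerre fractional
integral. -/
theorem stmt17 (a x u : ℝ) (ha : 0 < a) (hu : 0 < u) (hx : u < x) :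
    (Real.Gamma (2*a))⁻¹ * u^(-a) * Fg a (1 - x/u)
      = 2 / (Real.Gamma a)^2 *
          ∫ y in Set.Ioi (0:ℝ), (2 * Real.sqrt (x*u) * Real.cosh y + x + u)^(-a) ∧
    (x-u)^(2*a-1) / Real.Gamma (2*a) * u^(-a) * Fg a (1 - x/u)
      = 2 * (x-u)^(2*a-1) / (Real.Gamma a)^2 *
          ∫ y in Set.Ioi (0:ℝ), (2 * Real.sqrt (x*u) * Real.cosh y + x + u)^(-a) := by
  have hΓ : Real.Gamma (2 * a) ≠ 0 := (Gamma_pos_of_pos (by linarith)).ne'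
  have key := rpow_neg_mul_integral_euler_eq_two_mul_integral_cosh a hu (hu.trans hx)
  have kernel : (Real.Gamma (2*a))⁻¹ * u^(-a) * Fg a (1 - x/u)
      = 2 / (Real.Gamma a)^2 *
          ∫ y in Set.Ioi (0:ℝ), (2 * Real.sqrt (x*u) * Real.cosh y + x + u)^(-a) := by
    rw [Fg, div_mul_eq_mul_div 2, ← key, mul_mul_mul_comm, mul_div_assoc', inv_mul_cancel₀ hΓ]
    ring
  exact ⟨kernel, by linear_combination (x-u)^(2*a-1) * kernel⟩
end

section
/- Let α > 1/2, β > 0, and x > t > 0. Then (1/(Γ(2β)Γ(2α))) ∫_t^x (x−u)^{2β−1} (u−t)^{2α−1} u^{−β} F_β(1 − x/u) F_α(1 − u/t) du = ( t^{2α+β−1} / Γ(2(α+β)) ) · (x/t − 1)^{2(α+β)−1} · F_{α+β}(1 − x/t). -/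
open MeasureTheory Set
open scoped ENNReal

/-!
Substituting `u = t + (x - t) s` in the Euler integral turns `Fg a (1 - x/t)` into
`Γ(2a) / Γ(a)² · t^a (x - t)^(1 - 2a) · K_a(x, t)` with
`K_a(x, t) = ∫_t^x (x - u)^(a-1) (u - t)^(a-1) u^(-a) du`, a Riemann–Liouville integral `I^a`
(lower limit `t`, without the `1/Γ(a)`) of `g_a(u) = (u - t)^(a-1) u^(-a)`. The theorem becomes
`∫_t^x K_β(x, u) K_α(u, t) du = B(α, β)² K_{α+β}(x, t)`. Expanding `K_β` and changing the order of
integration leaves `I^β I^α g_α = B(α, β) I^{α+β} g_α` (the semigroup law), and the inversion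
`w = t v / s` rewrites `I^{α+β} g_α (v)` as `v^β I^α g_{α+β} (v)`; the factor `v^β` cancels the
`v^(-β)` of `K_β`, and a second use of the semigroup law produces `K_{α+β}`.
Working with lower Lebesgue integrals makes every change of the order of integration an instance
of Tonelli's theorem, free of integrability conditions.
-/

open ENNReal (ofReal ofReal_mul ofReal_ne_top ofReal_one ofReal_le_ofReal)
open ProbabilityTheory (beta beta_pos)

lemma lintegral_Ioo_eq_mul_lintegral_Ioo_zero_one {c d : ℝ} (hcd : c < d) (g : ℝ → ℝ≥0∞) :
    ∫⁻ u in Ioo c d, g u = ofReal (d - c) * ∫⁻ s in Ioo 0 1, g ((d - c) * s + c) := by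
  have hdc : 0 < d - c := sub_pos.mpr hcd
  have himage : (fun s => (d - c) * s + c) '' Ioo 0 1 = Ioo c d := by
    rw [image_affine_Ioo hdc]; simp
  rw [← himage, lintegral_image_eq_lintegral_abs_deriv_mul measurableSet_Ioo
    (fun s _ => ((hasDerivAt_id' s).const_mul (d - c) |>.add_const c).hasDerivWithinAt)
    (fun s _ s' _ h => by simpa [hdc.ne'] using h),
    abs_of_pos (by simpa using hdc), ← lintegral_const_mul' _ _ ofReal_ne_top]
  simp

lemma lintegral_Ioo_zero_one_rpow_mul_one_sub_rpow {a b : ℝ} (ha : 0 < a) (hb : 0 < b) :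
    ∫⁻ s in Ioo 0 1, ofReal (s ^ (a - 1) * (1 - s) ^ (b - 1)) = ofReal (beta a b) := by
  have hB := beta_pos ha hb
  rw [← mul_one (ofReal _), ← ProbabilityTheory.lintegral_betaPDF_eq_one ha hb,
    ProbabilityTheory.lintegral_betaPDF, ← lintegral_const_mul' _ _ ofReal_ne_top]
  refine setLIntegral_congr_fun measurableSet_Ioo fun s _ => ?_
  rw [← ofReal_mul hB.le]
  congr 1
  field_simp

lemma lintegral_Ioo_sub_rpow_mul_sub_rpow {a b c d : ℝ} (ha : 0 < a) (hb : 0 < b)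
    (hcd : c < d) :
    ∫⁻ u in Ioo c d, ofReal ((d - u) ^ (b - 1) * (u - c) ^ (a - 1))
      = ofReal (beta a b * (d - c) ^ (a + b - 1)) := by
  have hdc : 0 < d - c := sub_pos.mpr hcd
  have hpt : ∀ s ∈ Ioo (0 : ℝ) 1,
      ofReal ((d - ((d - c) * s + c)) ^ (b - 1) * ((d - c) * s + c - c) ^ (a - 1))
        = ofReal ((d - c) ^ (a + b - 2)) * ofReal (s ^ (a - 1) * (1 - s) ^ (b - 1)) := by
    rintro s ⟨hs0, hs1⟩
    rw [← ofReal_mul (by positivity), show d - ((d - c) * s + c) = (d - c) * (1 - s) by ring,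
      show (d - c) * s + c - c = (d - c) * s by ring, Real.mul_rpow hdc.le (by linarith),
      Real.mul_rpow hdc.le hs0.le, show a + b - 2 = (b - 1) + (a - 1) by ring,
      Real.rpow_add hdc]
    ring_nf
  rw [lintegral_Ioo_eq_mul_lintegral_Ioo_zero_one hcd,
    setLIntegral_congr_fun measurableSet_Ioo hpt, lintegral_const_mul' _ _ ofReal_ne_top,
    lintegral_Ioo_zero_one_rpow_mul_one_sub_rpow ha hb, ← mul_assoc, ← ofReal_mul hdc.le,
    ← ofReal_mul (by positivity), show a + b - 1 = 1 + (a + b - 2) by ring, Real.rpow_add hdc,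
    Real.rpow_one]
  ring_nf

lemma lintegral_Ioo_lintegral_Ioo_swap {c x : ℝ} {F : ℝ → ℝ → ℝ≥0∞}
    (hF : Measurable (Function.uncurry F)) :
    ∫⁻ a in Ioo c x, ∫⁻ b in Ioo a x, F a b
      = ∫⁻ b in Ioo c x, ∫⁻ a in Ioo c b, F a b := by
  set G : ℝ → ℝ → ℝ≥0∞ := fun a b =>
    {p : ℝ × ℝ | p.1 < p.2}.indicator (Function.uncurry F) (a, b)
  have hG : Measurable (Function.uncurry G) :=
    hF.indicator (measurableSet_lt measurable_fst measurable_snd)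
  have hleft : ∀ a ∈ Ioo c x, ∫⁻ b in Ioo a x, F a b = ∫⁻ b in Ioo c x, G a b := by
    rintro a ⟨hca, -⟩
    have : ∀ b, G a b = (Ioi a).indicator (F a) b := fun b => by simp [G, indicator_apply]
    simp_rw [this, setLIntegral_indicator measurableSet_Ioi, Ioi_inter_Ioo, max_eq_left hca.le]
  have hright : ∀ b ∈ Ioo c x, ∫⁻ a in Ioo c b, F a b = ∫⁻ a in Ioo c x, G a b := by
    rintro b ⟨-, hbx⟩
    have : ∀ a, G a b = (Iio b).indicator (F · b) a := fun a => by simp [G, indicator_apply]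
    simp_rw [this, setLIntegral_indicator measurableSet_Iio, Iio_inter_Ioo, min_eq_left hbx.le]
  rw [setLIntegral_congr_fun measurableSet_Ioo hleft,
    setLIntegral_congr_fun measurableSet_Ioo hright, lintegral_lintegral_swap hG.aemeasurable]

lemma measurable_lintegral_Ioo {l r : ℝ → ℝ} (hl : Measurable l) (hr : Measurable r)
    {f : ℝ → ℝ → ℝ≥0∞} (hf : Measurable (Function.uncurry f)) :
    Measurable fun u => ∫⁻ w in Ioo (l u) (r u), f u w := by
  set S := {p : ℝ × ℝ | l p.1 < p.2 ∧ p.2 < r p.1}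
  have hS : MeasurableSet S :=
    (measurableSet_lt (hl.comp measurable_fst) measurable_snd).inter
      (measurableSet_lt measurable_snd (hr.comp measurable_fst))
  have : ∀ u, ∫⁻ w in Ioo (l u) (r u), f u w
      = ∫⁻ w, S.indicator (Function.uncurry f) (u, w) := by
    intro u
    rw [← lintegral_indicator measurableSet_Ioo]
    rfl
  simp_rw [this]
  exact (hf.indicator hS).lintegral_prod_right'

/-- The Riemann–Liouville integral of order `a` and lower limit `t`, without the factor
`1 / Γ(a)`. -/
noncomputable def rlIntegral (a t : ℝ) (g : ℝ → ℝ≥0∞) (v : ℝ) : ℝ≥0∞ :=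
  ∫⁻ w in Ioo t v, ofReal ((v - w) ^ (a - 1)) * g w

@[fun_prop]
lemma measurable_rlIntegral (a t : ℝ) {g : ℝ → ℝ≥0∞} (hg : Measurable g) :
    Measurable (rlIntegral a t g) :=
  measurable_lintegral_Ioo measurable_const measurable_id (by fun_prop)

lemma rlIntegral_rlIntegral {a b t : ℝ} (ha : 0 < a) (hb : 0 < b) {g : ℝ → ℝ≥0∞}
    (hg : Measurable g) (v : ℝ) :
    rlIntegral b t (rlIntegral a t g) v = ofReal (beta a b) * rlIntegral (a + b) t g v := by
  have hinner : ∀ w ∈ Ioo t v,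
      ∫⁻ u in Ioo w v, ofReal ((v - u) ^ (b - 1)) * (ofReal ((u - w) ^ (a - 1)) * g w)
        = ofReal (beta a b) * (ofReal ((v - w) ^ (a + b - 1)) * g w) := by
    rintro w ⟨-, hwv⟩
    rw [← mul_assoc, ← ofReal_mul (beta_pos ha hb).le,
      ← lintegral_Ioo_sub_rpow_mul_sub_rpow ha hb hwv, ← lintegral_mul_const _ (by fun_prop)]
    refine setLIntegral_congr_fun measurableSet_Ioo fun u ⟨_, huv⟩ => ?_
    rw [← mul_assoc, ← ofReal_mul (Real.rpow_nonneg (sub_pos.mpr huv).le _)]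
  unfold rlIntegral
  simp_rw [← lintegral_const_mul' _ _ ofReal_ne_top]
  rw [← lintegral_Ioo_lintegral_Ioo_swap (by fun_prop),
    setLIntegral_congr_fun measurableSet_Ioo hinner, lintegral_const_mul _ (by fun_prop)]

lemma lintegral_Ioo_comp_div {t v : ℝ} (ht : 0 < t) (htv : t < v) (g : ℝ → ℝ≥0∞) :
    ∫⁻ w in Ioo t v, g w = ∫⁻ s in Ioo t v, ofReal (t * v / s ^ 2) * g (t * v / s) := by
  have htv0 : 0 < t * v := mul_pos ht (ht.trans htv)
  have hmaps : MapsTo (fun s => t * v / s) (Ioo t v) (Ioo t v) := by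
    rintro s ⟨hts, hsv⟩
    have hs : 0 < s := ht.trans hts
    constructor
    · rw [lt_div_iff₀ hs]; nlinarith
    · rw [div_lt_iff₀ hs]; nlinarith
  have himage : (fun s => t * v / s) '' Ioo t v = Ioo t v := by
    refine hmaps.image_subset.antisymm fun w hw => ⟨t * v / w, hmaps hw, ?_⟩
    have : w ≠ 0 := (ht.trans hw.1).ne'
    have : v ≠ 0 := (ht.trans htv).ne'
    field_simp
  have hderiv : ∀ s ∈ Ioo t v,
      HasDerivWithinAt (fun s => t * v / s) (-(t * v) / s ^ 2) (Ioo t v) s := by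
    intro s hs
    have : s ≠ 0 := (ht.trans hs.1).ne'
    simpa [div_eq_mul_inv, neg_div] using
      ((hasDerivAt_inv this).const_mul (t * v)).hasDerivWithinAt
  have hinj : InjOn (fun s => t * v / s) (Ioo t v) := fun s _ s' _ h =>
    inv_injective (mul_right_injective₀ htv0.ne' h)
  conv_lhs => rw [← himage]
  rw [lintegral_image_eq_lintegral_abs_deriv_mul measurableSet_Ioo hderiv hinj]
  refine setLIntegral_congr_fun measurableSet_Ioo fun s _ => ?_
  rw [abs_div, abs_neg, abs_of_pos htv0, abs_of_nonneg (sq_nonneg s)]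

lemma rpow_inversion_identity {a c t s v : ℝ} (ht : 0 < t) (hts : t < s) (hsv : s < v) :
    t * v / s ^ 2 * ((v - t * v / s) ^ (c - 1) * ((t * v / s - t) ^ (a - 1) * (t * v / s) ^ (-a)))
      = v ^ (c - a) * ((v - s) ^ (a - 1) * ((s - t) ^ (c - 1) * s ^ (-c))) := by
  have hs : 0 < s := ht.trans hts
  have hv : 0 < v := hs.trans hsv
  have hX : 0 < s - t := sub_pos.mpr hts
  have hY : 0 < v - s := sub_pos.mpr hsv
  rw [show v - t * v / s = v * (s - t) / s by field_simp,
    show t * v / s - t = t * (v - s) / s by field_simp,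
    Real.div_rpow (by positivity) hs.le, Real.div_rpow (by positivity) hs.le,
    Real.div_rpow (by positivity) hs.le, Real.mul_rpow hv.le hX.le, Real.mul_rpow ht.le hY.le,
    Real.mul_rpow ht.le hv.le, Real.rpow_sub_one hv.ne', Real.rpow_sub_one hs.ne',
    Real.rpow_sub_one ht.ne', Real.rpow_sub_one hs.ne', Real.rpow_neg ht.le, Real.rpow_neg hv.le,
    Real.rpow_neg hs.le, Real.rpow_neg hs.le, Real.rpow_sub hv]
  field_simp

lemma rlIntegral_inversion {a c t v : ℝ} (ht : 0 < t) (htv : t < v) :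
    rlIntegral c t (fun w => ofReal ((w - t) ^ (a - 1) * w ^ (-a))) v
      = ofReal (v ^ (c - a))
        * rlIntegral a t (fun s => ofReal ((s - t) ^ (c - 1) * s ^ (-c))) v := by
  unfold rlIntegral
  rw [lintegral_Ioo_comp_div ht htv, ← lintegral_const_mul' _ _ ofReal_ne_top]
  refine setLIntegral_congr_fun measurableSet_Ioo fun s ⟨hts, hsv⟩ => ?_
  have hw : t * v / s < v := by
    rw [div_lt_iff₀ (ht.trans hts)]; nlinarith
  rw [← ofReal_mul (Real.rpow_nonneg (sub_nonneg.mpr hw.le) _),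
    ← ofReal_mul (div_nonneg (mul_pos ht (ht.trans htv)).le (sq_nonneg s)),
    ← ofReal_mul (Real.rpow_nonneg (sub_nonneg.mpr hsv.le) _),
    ← ofReal_mul (Real.rpow_nonneg (ht.trans htv).le _), rpow_inversion_identity ht hts hsv]

noncomputable def hypKernel (a x t : ℝ) : ℝ≥0∞ :=
  rlIntegral a t (fun u => ofReal ((u - t) ^ (a - 1) * u ^ (-a))) x

@[fun_prop]
lemma measurable_hypKernel_left (a t : ℝ) : Measurable (hypKernel a · t) := by
  unfold hypKernel; fun_prop

@[fun_prop]
lemma measurable_hypKernel_right (a x : ℝ) : Measurable (hypKernel a x) :=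
  measurable_lintegral_Ioo measurable_id measurable_const (by fun_prop)

lemma rlIntegral_hypKernel {α β t v : ℝ} (hα : 0 < α) (hβ : 0 < β) (ht : 0 < t)
    (htv : t < v) :
    rlIntegral β t (hypKernel α · t) v
      = ofReal (beta α β) * ofReal (v ^ β)
        * rlIntegral α t (fun s => ofReal ((s - t) ^ (α + β - 1) * s ^ (-(α + β)))) v := by
  simp only [hypKernel]
  rw [rlIntegral_rlIntegral hα hβ (by fun_prop), rlIntegral_inversion ht htv,
    add_sub_cancel_left, mul_assoc]

lemma lintegral_hypKernel_mul_hypKernel {α β t x : ℝ} (hα : 0 < α) (hβ : 0 < β)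
    (ht : 0 < t) :
    ∫⁻ u in Ioo t x, hypKernel β x u * hypKernel α u t
      = ofReal (beta α β) ^ 2 * hypKernel (α + β) x t := by
  set B := ofReal (beta α β)
  set g := fun s => ofReal ((s - t) ^ (α + β - 1) * s ^ (-(α + β)))
  have hinner : ∀ v ∈ Ioo t x,
      ∫⁻ u in Ioo t v, ofReal ((x - v) ^ (β - 1)) * ofReal ((v - u) ^ (β - 1) * v ^ (-β))
          * hypKernel α u t
        = B * (ofReal ((x - v) ^ (β - 1)) * rlIntegral α t g v) := by
    rintro v ⟨htv, -⟩
    have hv : 0 < v := ht.trans htv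
    have hcancel : ofReal (v ^ (-β)) * ofReal (v ^ β) = 1 := by
      rw [← ofReal_mul (by positivity), ← Real.rpow_add hv, neg_add_cancel, Real.rpow_zero,
        ofReal_one]
    calc _ = ∫⁻ u in Ioo t v, ofReal ((x - v) ^ (β - 1)) * ofReal (v ^ (-β))
          * (ofReal ((v - u) ^ (β - 1)) * hypKernel α u t) := by
          refine setLIntegral_congr_fun measurableSet_Ioo fun u ⟨_, huv⟩ => ?_
          rw [ofReal_mul (Real.rpow_nonneg (sub_pos.mpr huv).le _)]
          ring
      _ = B * (ofReal ((x - v) ^ (β - 1)) * rlIntegral α t g v)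
          * (ofReal (v ^ (-β)) * ofReal (v ^ β)) := by
          rw [lintegral_const_mul' _ _ (by finiteness), ← rlIntegral,
            rlIntegral_hypKernel hα hβ ht htv]
          ring
      _ = _ := by rw [hcancel, mul_one]
  calc ∫⁻ u in Ioo t x, hypKernel β x u * hypKernel α u t
      = ∫⁻ u in Ioo t x, ∫⁻ v in Ioo u x, ofReal ((x - v) ^ (β - 1))
          * ofReal ((v - u) ^ (β - 1) * v ^ (-β)) * hypKernel α u t := by
        refine lintegral_congr fun u => ?_
        rw [hypKernel, rlIntegral, lintegral_mul_const _ (by fun_prop)]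
    _ = ∫⁻ v in Ioo t x, ∫⁻ u in Ioo t v, ofReal ((x - v) ^ (β - 1))
          * ofReal ((v - u) ^ (β - 1) * v ^ (-β)) * hypKernel α u t :=
        lintegral_Ioo_lintegral_Ioo_swap (by fun_prop)
    _ = B * rlIntegral β t (rlIntegral α t g) x := by
        rw [setLIntegral_congr_fun measurableSet_Ioo hinner, lintegral_const_mul _ (by fun_prop)]
        rfl
    _ = B ^ 2 * hypKernel (α + β) x t := by
        rw [rlIntegral_rlIntegral hα hβ (by fun_prop), hypKernel, ← mul_assoc, sq]

lemma hypKernel_lt_top {a t x : ℝ} (ha : 0 < a) (ht : 0 < t) (htx : t < x) :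
    hypKernel a x t < ⊤ := by
  calc hypKernel a x t
      ≤ ∫⁻ u in Ioo t x,
          ofReal ((x - u) ^ (a - 1) * (u - t) ^ (a - 1)) * ofReal (t ^ (-a)) := by
        refine setLIntegral_mono (by fun_prop) fun u ⟨htu, hux⟩ => ?_
        have hpow : u ^ (-a) ≤ t ^ (-a) :=
          Real.rpow_le_rpow_of_nonpos ht htu.le (neg_nonpos.mpr ha.le)
        rw [← ofReal_mul (Real.rpow_nonneg (sub_pos.mpr hux).le _),
          ← ofReal_mul (by positivity), mul_assoc]
        refine ofReal_le_ofReal (mul_le_mul_of_nonneg_left ?_ (by positivity))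
        exact mul_le_mul_of_nonneg_left hpow (Real.rpow_nonneg (sub_pos.mpr htu).le _)
    _ = ofReal (beta a a * (x - t) ^ (a + a - 1)) * ofReal (t ^ (-a)) := by
        rw [lintegral_mul_const _ (by fun_prop), lintegral_Ioo_sub_rpow_mul_sub_rpow ha ha htx]
    _ < ⊤ := by finiteness

lemma integral_hypKernel_mul_hypKernel {α β t x : ℝ} (hα : 0 < α) (hβ : 0 < β)
    (ht : 0 < t) :
    ∫ u in Ioo t x, (hypKernel β x u).toReal * (hypKernel α u t).toReal
      = beta α β ^ 2 * (hypKernel (α + β) x t).toReal := by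
  simp_rw [← ENNReal.toReal_mul]
  rw [integral_toReal (by fun_prop), lintegral_hypKernel_mul_hypKernel hα hβ ht,
    ENNReal.toReal_mul, ENNReal.toReal_pow, ENNReal.toReal_ofReal (beta_pos hα hβ).le]
  refine ae_restrict_of_forall_mem measurableSet_Ioo fun u ⟨htu, hux⟩ => ?_
  exact ENNReal.mul_lt_top (hypKernel_lt_top hβ (ht.trans htu) hux) (hypKernel_lt_top hα ht htu)

lemma Fg_eq_toReal_lintegral {a z : ℝ} (hz : z ≤ 1) :
    Fg a z = Real.Gamma (2 * a) / Real.Gamma a ^ 2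
      * (∫⁻ s in Ioo 0 1,
          ofReal (s ^ (a - 1) * (1 - s) ^ (a - 1) * (1 - z * s) ^ (-a))).toReal := by
  rw [Fg, intervalIntegral.integral_of_le zero_le_one, integral_Ioc_eq_integral_Ioo,
    integral_eq_lintegral_of_nonneg_ae _ (by fun_prop)]
  refine ae_restrict_of_forall_mem measurableSet_Ioo fun s ⟨hs0, hs1⟩ => ?_
  have : 0 < 1 - z * s := by nlinarith
  positivity

lemma hypKernel_eq_mul_lintegral {a t x : ℝ} (ht : 0 < t) (htx : t < x) :
    hypKernel a x t = ofReal ((x - t) ^ (2 * a - 1) * t ^ (-a))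
      * ∫⁻ s in Ioo 0 1,
          ofReal (s ^ (a - 1) * (1 - s) ^ (a - 1) * (1 - (1 - x / t) * s) ^ (-a)) := by
  have hxt : 0 < x - t := sub_pos.mpr htx
  rw [hypKernel, rlIntegral, lintegral_Ioo_eq_mul_lintegral_Ioo_zero_one htx,
    ← lintegral_const_mul' _ _ ofReal_ne_top, ← lintegral_const_mul' _ _ ofReal_ne_top]
  refine setLIntegral_congr_fun measurableSet_Ioo fun s ⟨hs0, hs1⟩ => ?_
  have hu : 0 < (x - t) * s + t := by positivity
  rw [← ofReal_mul (Real.rpow_nonneg (by nlinarith) _), ← ofReal_mul hxt.le,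
    ← ofReal_mul (by positivity)]
  congr 1
  rw [show x - ((x - t) * s + t) = (x - t) * (1 - s) by ring,
    show (x - t) * s + t - t = (x - t) * s by ring,
    show 1 - (1 - x / t) * s = ((x - t) * s + t) / t by field_simp; ring,
    Real.mul_rpow hxt.le (by linarith), Real.mul_rpow hxt.le hs0.le, Real.div_rpow hu.le ht.le,
    show 2 * a - 1 = a + a - 1 by ring, Real.rpow_sub_one hxt.ne' (a + a), Real.rpow_add hxt,
    Real.rpow_sub_one hxt.ne' a, Real.rpow_neg ht.le, Real.rpow_neg hu.le]
  field_simp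

lemma Fg_one_sub_div_eq {a t x : ℝ} (ht : 0 < t) (htx : t < x) :
    Fg a (1 - x / t) = Real.Gamma (2 * a) / Real.Gamma a ^ 2 * t ^ a
      * (hypKernel a x t).toReal / (x - t) ^ (2 * a - 1) := by
  have hxt : 0 < x - t := sub_pos.mpr htx
  have hz : 1 - x / t ≤ 1 := by have := div_pos (ht.trans htx) ht; linarith
  rw [Fg_eq_toReal_lintegral hz, hypKernel_eq_mul_lintegral ht htx, ENNReal.toReal_mul,
    ENNReal.toReal_ofReal (by positivity), Real.rpow_neg ht.le]
  generalize (∫⁻ s in Ioo (0 : ℝ) 1,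
    ofReal (s ^ (a - 1) * (1 - s) ^ (a - 1) * (1 - (1 - x / t) * s) ^ (-a))).toReal = I
  have : 0 < t ^ a := by positivity
  have : 0 < (x - t) ^ (2 * a - 1) := by positivity
  field_simp

/-- The hypergeometric kernel composition identity underlying the semigroup property. -/
theorem stmt18 (α β x t : ℝ) (hα : 1/2 < α) (hβ : 0 < β) (ht : 0 < t) (hx : t < x) :
    (Real.Gamma (2*β) * Real.Gamma (2*α))⁻¹ *
      ∫ u in t..x, (x-u)^(2*β-1) * (u-t)^(2*α-1) * u^(-β) * Fg β (1 - x/u) * Fg α (1 - u/t)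
    = t^(2*α+β-1) / Real.Gamma (2*(α+β)) * (x/t - 1)^(2*(α+β)-1) * Fg (α+β) (1 - x/t) := by
  have hα0 : 0 < α := by linarith
  have hintegrand : ∀ u ∈ Ioo t x,
      (x-u)^(2*β-1) * (u-t)^(2*α-1) * u^(-β) * Fg β (1 - x/u) * Fg α (1 - u/t)
        = Real.Gamma (2*β) / Real.Gamma β ^ 2 * (Real.Gamma (2*α) / Real.Gamma α ^ 2) * t ^ α
          * ((hypKernel β x u).toReal * (hypKernel α u t).toReal) := by
    rintro u ⟨htu, hux⟩
    have hu : 0 < u := ht.trans htu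
    rw [Fg_one_sub_div_eq hu hux, Fg_one_sub_div_eq ht htu, Real.rpow_neg hu.le]
    have : 0 < (x - u) ^ (2 * β - 1) := Real.rpow_pos_of_pos (sub_pos.mpr hux) _
    have : 0 < (u - t) ^ (2 * α - 1) := Real.rpow_pos_of_pos (sub_pos.mpr htu) _
    have : 0 < u ^ β := Real.rpow_pos_of_pos hu _
    field_simp
  have htpow : t ^ (2*α+β-1) / t ^ (2*(α+β)-1) * t ^ (α+β) = t ^ α := by
    rw [← Real.rpow_sub ht, ← Real.rpow_add ht]; ring_nf
  rw [intervalIntegral.integral_of_le hx.le, integral_Ioc_eq_integral_Ioo,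
    setIntegral_congr_fun measurableSet_Ioo hintegrand, integral_const_mul,
    integral_hypKernel_mul_hypKernel hα0 hβ ht, Fg_one_sub_div_eq ht hx, div_sub_one ht.ne',
    Real.div_rpow (sub_pos.mpr hx).le ht.le, beta, ← htpow]
  have := Real.Gamma_pos_of_pos hα0
  have := Real.Gamma_pos_of_pos hβ
  have := Real.Gamma_pos_of_pos (add_pos hα0 hβ)
  have := Real.Gamma_pos_of_pos (by linarith : 0 < 2 * α)
  have := Real.Gamma_pos_of_pos (by linarith : 0 < 2 * β)
  have := Real.Gamma_pos_of_pos (by linarith : 0 < 2 * (α + β))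
  have : 0 < (x - t) ^ (2 * (α + β) - 1) := Real.rpow_pos_of_pos (sub_pos.mpr hx) _
  have : 0 < t ^ (2 * (α + β) - 1) := Real.rpow_pos_of_pos ht _
  field_simp
end
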